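/- arXiv:1205.2278 — 4 statements merged into one kernel-verified Lean document; each statement's English description precedes it below -/
import Mathlib

section
/- Let ρ̄ : ℝ → ℝ be smooth with ρ̄' bounded and inf ρ̄ > 0, let g > 0, and for ψ ∈ H²(ℝ) with ∫ ρ̄(|ξ|²ψ² + |ψ'|²) dx = 1 define E(ψ) = ∫ sμ(4|ξ|²|ψ'|² + ||ξ|²ψ + ψ''|²) − g|ξ|² ρ̄' ψ² dx. Then E(ψ) ≥ −g ‖ρ̄'/ρ̄‖_{L^∞}; in particular the infimum of E over the admissible set is finite. -/
open MeasureTheory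

/-- For the energy functional `E` of the linearized Rayleigh–Taylor
problem, any admissible `ψ` (normalized by `J ψ = 1`) satisfies
`E ψ ≥ -g * ‖ρ̄'/ρ̄‖_{L^∞}`; in particular the infimum of `E` over the
admissible set is finite (bounded below). -/
theorem stmt0_energy_bounded_below
    (ρ : ℝ → ℝ) (hρ : ContDiff ℝ (⊤ : ℕ∞) ρ)
    (hρ'bdd : ∃ B, ∀ x, |deriv ρ x| ≤ B)
    (hρpos : ∃ c > 0, ∀ x, c ≤ ρ x)
    (g μ s k : ℝ) (hg : 0 < g) (hμ : 0 < μ) (hs : 0 < s) (hk : k ≠ 0)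
    (M : ℝ)
    (hbdd : BddAbove (Set.range fun x => |deriv ρ x| / ρ x))
    (hM : M = ⨆ x, |deriv ρ x| / ρ x)
    (ψ : ℝ → ℝ)
    (hψ : MemLp ψ 2 volume) (hψ' : MemLp (deriv ψ) 2 volume)
    (hψ'' : MemLp (deriv (deriv ψ)) 2 volume)
    (hInt : Integrable (fun x =>
      s * μ * (4 * k ^ 2 * (deriv ψ x) ^ 2 + (k ^ 2 * ψ x + deriv (deriv ψ) x) ^ 2)
        - g * k ^ 2 * deriv ρ x * (ψ x) ^ 2))
    (hJInt : Integrable (fun x => ρ x * (k ^ 2 * (ψ x) ^ 2 + (deriv ψ x) ^ 2)))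
    (hJ : ∫ x, ρ x * (k ^ 2 * (ψ x) ^ 2 + (deriv ψ x) ^ 2) = 1) :
    (∫ x, s * μ * (4 * k ^ 2 * (deriv ψ x) ^ 2
        + (k ^ 2 * ψ x + deriv (deriv ψ) x) ^ 2)
        - g * k ^ 2 * deriv ρ x * (ψ x) ^ 2) ≥ -g * M := by
  obtain ⟨c, hc, hcρ⟩ := hρpos
  have hρx : ∀ x, 0 < ρ x := fun x => lt_of_lt_of_le hc (hcρ x)
  -- M bounds |ρ'|/ρ and M ≥ 0
  have hMle : ∀ x, |deriv ρ x| / ρ x ≤ M := by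
    intro x; rw [hM]; exact le_ciSup hbdd x
  have hM0 : 0 ≤ M :=
    le_trans (div_nonneg (abs_nonneg _) (hρx 0).le) (hMle 0)
  -- integrability of the potential term
  obtain ⟨B, hB⟩ := hρ'bdd
  have hψsq : Integrable (fun x => (ψ x) ^ 2) := by
    have := hψ.integrable_sq
    simpa [pow_two] using this
  have hmeasρ' : AEStronglyMeasurable (fun x => g * k ^ 2 * deriv ρ x) volume :=
    (continuous_const.mul (hρ.continuous_deriv (by simp))).aestronglyMeasurable
  have hhInt : Integrable (fun x => g * k ^ 2 * deriv ρ x * (ψ x) ^ 2) := by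
    apply Integrable.bdd_mul (c := |g * k ^ 2| * B) hψsq hmeasρ'
    refine Filter.Eventually.of_forall (fun x => ?_)
    have : ‖g * k ^ 2 * deriv ρ x‖ = |g * k ^ 2| * |deriv ρ x| := by
      rw [Real.norm_eq_abs, abs_mul]
    rw [this]
    exact mul_le_mul_of_nonneg_left (hB x) (abs_nonneg _)
  have hfInt : Integrable (fun x =>
      s * μ * (4 * k ^ 2 * (deriv ψ x) ^ 2 + (k ^ 2 * ψ x + deriv (deriv ψ) x) ^ 2)) := by
    have h := hInt.add hhInt
    refine h.congr (Filter.Eventually.of_forall fun x => ?_)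
    simp
  -- split the integral
  rw [integral_sub hfInt hhInt]
  have hfnonneg : 0 ≤ ∫ x,
      s * μ * (4 * k ^ 2 * (deriv ψ x) ^ 2 + (k ^ 2 * ψ x + deriv (deriv ψ) x) ^ 2) := by
    apply integral_nonneg
    intro x
    have : (0:ℝ) ≤ 4 * k ^ 2 * (deriv ψ x) ^ 2 + (k ^ 2 * ψ x + deriv (deriv ψ) x) ^ 2 := by
      positivity
    exact mul_nonneg (by positivity) this
  have hhle : (∫ x, g * k ^ 2 * deriv ρ x * (ψ x) ^ 2) ≤ g * M := by
    have hpt : ∀ x, g * k ^ 2 * deriv ρ x * (ψ x) ^ 2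
        ≤ g * M * (ρ x * (k ^ 2 * (ψ x) ^ 2 + (deriv ψ x) ^ 2)) := by
      intro x
      have h1 : deriv ρ x ≤ M * ρ x := by
        have := hMle x
        calc deriv ρ x ≤ |deriv ρ x| := le_abs_self _
          _ = (|deriv ρ x| / ρ x) * ρ x := (div_mul_cancel₀ _ (hρx x).ne').symm
          _ ≤ M * ρ x := mul_le_mul_of_nonneg_right this (hρx x).le
      have h2 : g * k ^ 2 * deriv ρ x * (ψ x) ^ 2
          ≤ g * M * (ρ x * (k ^ 2 * (ψ x) ^ 2)) := by
        have := mul_le_mul_of_nonneg_left h1 (show (0:ℝ) ≤ g * k ^ 2 * (ψ x) ^ 2 by positivity)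
        nlinarith [this]
      have h3 : g * M * (ρ x * (k ^ 2 * (ψ x) ^ 2))
          ≤ g * M * (ρ x * (k ^ 2 * (ψ x) ^ 2 + (deriv ψ x) ^ 2)) := by
        apply mul_le_mul_of_nonneg_left _ (by positivity)
        apply mul_le_mul_of_nonneg_left _ (hρx x).le
        nlinarith [sq_nonneg (deriv ψ x)]
      linarith
    calc (∫ x, g * k ^ 2 * deriv ρ x * (ψ x) ^ 2)
        ≤ ∫ x, g * M * (ρ x * (k ^ 2 * (ψ x) ^ 2 + (deriv ψ x) ^ 2)) :=
          integral_mono hhInt (hJInt.const_mul _) hpt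
      _ = g * M * ∫ x, ρ x * (k ^ 2 * (ψ x) ^ 2 + (deriv ψ x) ^ 2) :=
          integral_const_mul _ _
      _ = g * M := by rw [hJ]; ring
  linarith
end

section
/- For fixed |ξ| ∈ [a,b] ⊂ (0,∞), the function α(s) := inf{E(ψ,s) : ψ ∈ A} satisfies α(s) ≤ −c₁ + s c₂ for all s > 0, where c₁, c₂ > 0 are constants depending only on ρ̄, μ, g, a, b. In particular α(s) < 0 for s sufficiently small. -/
open MeasureTheory

lemma aux_integral_pos {f : ℝ → ℝ} (hf : Continuous f) (hs : HasCompactSupport f)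
    (hnn : ∀ x, 0 ≤ f x) {x₀ r : ℝ} (hr : 0 < r)
    (hpos : ∀ x ∈ Metric.ball x₀ r, 0 < f x) : 0 < ∫ x, f x := by
  rw [integral_pos_iff_support_of_nonneg hnn (hf.integrable_of_hasCompactSupport hs)]
  refine lt_of_lt_of_le ?_ (measure_mono (fun x hx => (hpos x hx).ne'))
  exact Metric.measure_ball_pos _ _ hr

set_option maxHeartbeats 2000000 in

/-- For `|ξ| ∈ [a,b] ⊂ (0,∞)`, the infimum
`α(s) = inf { E(ψ,s) : ψ ∈ A }` satisfies `α(s) ≤ -c₁ + s·c₂` for all `s > 0`,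
with constants `c₁, c₂ > 0` depending only on `ρ̄, μ, g, a, b`.  In particular
`α(s) < 0` for small `s`. -/
theorem stmt4_alpha_upper_bound
    (ρ : ℝ → ℝ) (hρ : ContDiff ℝ (⊤ : ℕ∞) ρ)
    (hρ' : HasCompactSupport (deriv ρ))
    (hρpos : ∃ c > 0, ∀ x, c ≤ ρ x)
    (hρ'pos : ∃ x₀, 0 < deriv ρ x₀)
    (g μ a b : ℝ) (hg : 0 < g) (hμ : 0 < μ) (ha : 0 < a) (hab : a ≤ b) :
    ∃ c₁ > 0, ∃ c₂ > 0, ∀ k : ℝ, a ≤ k → k ≤ b → ∀ s : ℝ, 0 < s →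
      sInf ((fun ψ : ℝ → ℝ =>
          ∫ x, s * μ * (4 * k ^ 2 * (deriv ψ x) ^ 2
              + (k ^ 2 * ψ x + deriv (deriv ψ) x) ^ 2)
            - g * k ^ 2 * deriv ρ x * (ψ x) ^ 2) ''
        {ψ : ℝ → ℝ | MemLp ψ 2 volume ∧ MemLp (deriv ψ) 2 volume ∧
          MemLp (deriv (deriv ψ)) 2 volume ∧
          (∫ x, ρ x * (k ^ 2 * (ψ x) ^ 2 + (deriv ψ x) ^ 2)) = 1})
      ≤ -c₁ + s * c₂ := by
  obtain ⟨c, hc, hρc⟩ := hρpos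
  obtain ⟨x₀, hx₀⟩ := hρ'pos
  have hρcont : Continuous ρ := hρ.continuous
  have hρ'cont : Continuous (deriv ρ) := hρ.continuous_deriv (by simp)
  obtain ⟨ε, hε, hball⟩ := Metric.mem_nhds_iff.1
    ((isOpen_lt continuous_const hρ'cont).mem_nhds (show x₀ ∈ {x | 0 < deriv ρ x} from hx₀))
  set φ : ContDiffBump x₀ := ⟨ε/2, ε, by linarith, by linarith⟩ with hφdef
  set ψ0 : ℝ → ℝ := fun x => φ x with hψ0def
  have hψ0cd : ContDiff ℝ (⊤ : ℕ∞) ψ0 := φ.contDiff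
  have hψ0c : Continuous ψ0 := φ.continuous
  have hψ0s : HasCompactSupport ψ0 := φ.hasCompactSupport
  have hψ0d : Differentiable ℝ ψ0 := hψ0cd.differentiable (by simp)
  set ψ1 : ℝ → ℝ := deriv ψ0 with hψ1def
  have hψ1cd : ContDiff ℝ (⊤ : ℕ∞) ψ1 := (contDiff_infty_iff_deriv.1 hψ0cd).2
  have hψ1c : Continuous ψ1 := hψ1cd.continuous
  have hψ1s : HasCompactSupport ψ1 := hψ0s.deriv
  have hψ1d : Differentiable ℝ ψ1 := hψ1cd.differentiable (by simp)
  set ψ2 : ℝ → ℝ := deriv ψ1 with hψ2def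
  have hψ2c : Continuous ψ2 := hψ1cd.continuous_deriv (by exact_mod_cast le_top)
  have hψ2s : HasCompactSupport ψ2 := hψ1s.deriv
  -- support helpers
  have hsq : ∀ f : ℝ → ℝ, HasCompactSupport f → HasCompactSupport (fun x => f x ^ 2) :=
    fun f hf => hf.comp_left (g := (· ^ 2)) (by simp)
  have hcm : ∀ (r : ℝ) (f : ℝ → ℝ), HasCompactSupport f → HasCompactSupport (fun x => r * f x) :=
    fun r f hf => hf.mul_left
  have hml : ∀ (f g : ℝ → ℝ), HasCompactSupport g → HasCompactSupport (fun x => f x * g x) :=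
    fun f g hg => hg.mul_left

  -- basic integrabilities
  have hIψ0sq : Integrable (fun x => ψ0 x ^ 2) := (hψ0c.pow 2).integrable_of_hasCompactSupport (hsq _ hψ0s)
  have hIψ1sq : Integrable (fun x => ψ1 x ^ 2) := (hψ1c.pow 2).integrable_of_hasCompactSupport (hsq _ hψ1s)
  have hIψ2sq : Integrable (fun x => ψ2 x ^ 2) := (hψ2c.pow 2).integrable_of_hasCompactSupport (hsq _ hψ2s)
  have hIP : Integrable (fun x => deriv ρ x * ψ0 x ^ 2) :=
    (hρ'cont.mul (hψ0c.pow 2)).integrable_of_hasCompactSupport (hml _ _ (hsq _ hψ0s))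
  -- quantities
  set Q := ∫ x, ψ0 x ^ 2 with hQdef
  set Q1 := ∫ x, ψ1 x ^ 2 with hQ1def
  set Q2 := ∫ x, ψ2 x ^ 2 with hQ2def
  set P := ∫ x, deriv ρ x * ψ0 x ^ 2 with hPdef
  have hQ1nn : 0 ≤ Q1 := integral_nonneg fun x => sq_nonneg _
  have hQ2nn : 0 ≤ Q2 := integral_nonneg fun x => sq_nonneg _
  have hQpos : 0 < Q := by
    refine aux_integral_pos (x₀ := x₀) (hψ0c.pow 2) (hsq _ hψ0s) (fun x => sq_nonneg _) hε
      (fun x hx => pow_pos (φ.pos_of_mem_ball ?_) 2)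
    simpa [hφdef] using hx
  have hPpos : 0 < P := by
    refine aux_integral_pos (x₀ := x₀) (hρ'cont.mul (hψ0c.pow 2)) (hml _ _ (hsq _ hψ0s)) ?_
      (show 0 < ε/2 by linarith) ?_
    · intro x
      by_cases hx : ψ0 x = 0
      · simp [hx]
      · have hmem : x ∈ Metric.ball x₀ ε := by
          have : x ∈ Function.support φ := by simpa [hψ0def, Function.mem_support] using hx
          rw [φ.support_eq] at this; exact this
        exact mul_nonneg (hball hmem).le (sq_nonneg _)
    · intro x hx
      have hx' : x ∈ Metric.ball x₀ ε := Metric.ball_subset_ball (by linarith) hx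
      have h1 : 0 < deriv ρ x := hball hx'
      have h2 : 0 < ψ0 x := φ.pos_of_mem_ball (by simpa [hφdef] using hx')
      exact mul_pos h1 (pow_pos h2 2)
  -- Nb
  have hb : 0 < b := lt_of_lt_of_le ha hab
  have hINb : Integrable (fun x => ρ x * (b^2 * ψ0 x ^ 2 + ψ1 x ^ 2)) := by
    refine (hρcont.mul ((continuous_const.mul (hψ0c.pow 2)).add (hψ1c.pow 2))).integrable_of_hasCompactSupport
      (hml _ _ ?_)
    exact (hcm _ _ (hsq _ hψ0s)).add (hsq _ hψ1s)
  set Nb := ∫ x, ρ x * (b^2 * ψ0 x ^ 2 + ψ1 x ^ 2) with hNbdef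
  have hNbpos : 0 < Nb := by
    have h1 : (∫ x, (c*b^2) * ψ0 x ^ 2) ≤ Nb := by
      rw [hNbdef]
      refine integral_mono (hIψ0sq.const_mul _) hINb (fun x => ?_)
      have h2 := mul_nonneg (mul_nonneg (sub_nonneg.2 (hρc x)) (sq_nonneg b)) (sq_nonneg (ψ0 x))
      have h3 := mul_nonneg (le_trans hc.le (hρc x)) (sq_nonneg (ψ1 x))
      linarith [h2, h3]
    rw [integral_const_mul, ← hQdef] at h1
    have : 0 < c*b^2*Q := by positivity
    linarith
  -- bound on |deriv ρ|
  obtain ⟨M, hM⟩ := hρ'.exists_bound_of_continuous hρ'cont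
  set M0 := max M 0 with hM0def
  have hM0nn : 0 ≤ M0 := le_max_right _ _
  have hM0 : ∀ x, |deriv ρ x| ≤ M0 := fun x =>
    le_trans (by rw [← Real.norm_eq_abs]; exact hM x) (le_max_left _ _)
  -- constants
  set C := 4*b^2*Q1 + 2*b^4*Q + 2*Q2 with hCdef
  have hCpos : 0 < C := by
    have h1 : 0 ≤ 4*b^2*Q1 := by positivity
    have h2 : 0 < 2*b^4*Q := by positivity
    have h3 : 0 ≤ 2*Q2 := by positivity
    rw [hCdef]; linarith
  refine ⟨g*a^2*P/Nb, by positivity, μ*C/(c*a^2*Q), by positivity, ?_⟩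
  intro k hak hkb s hs
  have hk : 0 < k := lt_of_lt_of_le ha hak
  have hk2b : k^2 ≤ b^2 := by nlinarith
  have ha2k : a^2 ≤ k^2 := by nlinarith
  have hk4b : k^4 ≤ b^4 := by nlinarith [sq_nonneg (k^2), sq_nonneg (b^2)]
  -- the normalization integral N
  have hINk : Integrable (fun x => ρ x * (k^2 * ψ0 x ^ 2 + ψ1 x ^ 2)) := by
    refine (hρcont.mul ((continuous_const.mul (hψ0c.pow 2)).add (hψ1c.pow 2))).integrable_of_hasCompactSupport
      (hml _ _ ?_)
    exact (hcm _ _ (hsq _ hψ0s)).add (hsq _ hψ1s)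
  set N := ∫ x, ρ x * (k^2 * ψ0 x ^ 2 + ψ1 x ^ 2) with hNdef
  have hNlow : c*a^2*Q ≤ N := by
    have h1 : (∫ x, (c*a^2) * ψ0 x ^ 2) ≤ N := by
      rw [hNdef]
      refine integral_mono (hIψ0sq.const_mul _) hINk (fun x => ?_)
      have h2 := mul_nonneg (mul_nonneg (sub_nonneg.2 (hρc x)) (sq_nonneg k)) (sq_nonneg (ψ0 x))
      have h3 := mul_nonneg (mul_nonneg hc.le (sub_nonneg.2 ha2k)) (sq_nonneg (ψ0 x))
      have h4 := mul_nonneg (le_trans hc.le (hρc x)) (sq_nonneg (ψ1 x))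
      linarith [h2, h3, h4]
    rwa [integral_const_mul, ← hQdef] at h1
  have hNpos : 0 < N := lt_of_lt_of_le (by positivity) hNlow
  have hNle : N ≤ Nb := by
    rw [hNdef, hNbdef]
    refine integral_mono hINk hINb (fun x => ?_)
    have h2 := mul_nonneg (sub_nonneg.2 hk2b)
      (mul_nonneg (le_trans hc.le (hρc x)) (sq_nonneg (ψ0 x)))
    linarith [h2]
  -- the quantity I1
  have hIH : Integrable (fun x => 4*k^2*ψ1 x ^ 2 + (k^2*ψ0 x + ψ2 x)^2) := by
    refine ((continuous_const.mul (hψ1c.pow 2)).add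
      (((continuous_const.mul hψ0c).add hψ2c).pow 2)).integrable_of_hasCompactSupport ?_
    exact (hcm _ _ (hsq _ hψ1s)).add (hsq _ ((hcm _ _ hψ0s).add hψ2s))
  set I1 := ∫ x, 4*k^2*ψ1 x ^ 2 + (k^2*ψ0 x + ψ2 x)^2 with hI1def
  have hI1nn : 0 ≤ I1 := integral_nonneg fun x => by positivity
  have hI1le : I1 ≤ C := by
    have h1 : I1 ≤ ∫ x, 4*b^2*ψ1 x ^ 2 + (2*b^4*ψ0 x ^ 2 + 2*ψ2 x ^ 2) := by
      rw [hI1def]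
      refine integral_mono hIH ?_ (fun x => ?_)
      · exact ((hIψ1sq.const_mul _).add ((hIψ0sq.const_mul _).add (hIψ2sq.const_mul _)))
      · have h2 := sq_nonneg (k^2*ψ0 x - ψ2 x)
        have h3 := mul_nonneg (sub_nonneg.2 hk2b) (sq_nonneg (ψ1 x))
        have h4 := mul_nonneg (sub_nonneg.2 hk4b) (sq_nonneg (ψ0 x))
        linarith [h2, h3, h4]
    have hInt2 : Integrable (fun x => 2*b^4*ψ0 x ^ 2 + 2*ψ2 x ^ 2) :=
      (hIψ0sq.const_mul _).add (hIψ2sq.const_mul _)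
    rw [integral_add (hIψ1sq.const_mul (4*b^2)) hInt2,
      integral_add (hIψ0sq.const_mul (2*b^4)) (hIψ2sq.const_mul 2),
      integral_const_mul, integral_const_mul, integral_const_mul, ← hQdef, ← hQ1def, ← hQ2def] at h1
    rw [hCdef]; linarith
  -- the witness function
  set t := (Real.sqrt N)⁻¹ with htdef
  have ht2 : t^2 = N⁻¹ := by
    rw [htdef, inv_pow, Real.sq_sqrt hNpos.le]
  set ψw : ℝ → ℝ := fun x => t * ψ0 x with hψwdef
  have hdψ : deriv ψw = fun x => t * ψ1 x := by
    funext x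
    rw [hψwdef, hψ1def]
    exact deriv_const_mul t (hψ0d x)
  have hddψ : deriv (deriv ψw) = fun x => t * ψ2 x := by
    rw [hdψ]
    funext x
    rw [hψ2def]
    exact deriv_const_mul t (hψ1d x)
  have hmem1 : MemLp ψw 2 volume := by
    rw [hψwdef]
    exact (continuous_const.mul hψ0c).memLp_of_hasCompactSupport (hcm _ _ hψ0s)
  have hmem2 : MemLp (deriv ψw) 2 volume := by
    rw [hdψ]
    exact (continuous_const.mul hψ1c).memLp_of_hasCompactSupport (hcm _ _ hψ1s)
  have hmem3 : MemLp (deriv (deriv ψw)) 2 volume := by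
    rw [hddψ]
    exact (continuous_const.mul hψ2c).memLp_of_hasCompactSupport (hcm _ _ hψ2s)
  have hcon : (∫ x, ρ x * (k ^ 2 * (ψw x) ^ 2 + (deriv ψw x) ^ 2)) = 1 := by
    simp only [hdψ]
    simp only [hψwdef]
    have h1 : (fun x => ρ x * (k ^ 2 * (t * ψ0 x) ^ 2 + (t * ψ1 x) ^ 2))
        = fun x => t^2 * (ρ x * (k^2 * ψ0 x ^ 2 + ψ1 x ^ 2)) := by
      funext x; ring
    rw [h1, integral_const_mul, ← hNdef, ht2]
    exact inv_mul_cancel₀ hNpos.ne'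
  have hval : (∫ x, s * μ * (4 * k ^ 2 * (deriv ψw x) ^ 2
        + (k ^ 2 * ψw x + deriv (deriv ψw) x) ^ 2)
      - g * k ^ 2 * deriv ρ x * (ψw x) ^ 2) = t^2 * (s*μ*I1 - g*k^2*P) := by
    simp only [hddψ]
    simp only [hdψ]
    simp only [hψwdef]
    have h1 : (fun x => s * μ * (4 * k ^ 2 * (t * ψ1 x) ^ 2
          + (k ^ 2 * (t * ψ0 x) + t * ψ2 x) ^ 2)
        - g * k ^ 2 * deriv ρ x * (t * ψ0 x) ^ 2)
        = fun x => t^2 * ((s*μ) * (4*k^2*ψ1 x ^ 2 + (k^2*ψ0 x + ψ2 x)^2)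
          - (g*k^2) * (deriv ρ x * ψ0 x ^ 2)) := by
      funext x; ring
    rw [h1, integral_const_mul, integral_sub (hIH.const_mul _) (hIP.const_mul _),
      integral_const_mul, integral_const_mul, ← hI1def, ← hPdef]
  -- bounded below
  have hbdd : BddBelow ((fun ψ : ℝ → ℝ =>
          ∫ x, s * μ * (4 * k ^ 2 * (deriv ψ x) ^ 2
              + (k ^ 2 * ψ x + deriv (deriv ψ) x) ^ 2)
            - g * k ^ 2 * deriv ρ x * (ψ x) ^ 2) ''
        {ψ : ℝ → ℝ | MemLp ψ 2 volume ∧ MemLp (deriv ψ) 2 volume ∧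
          MemLp (deriv (deriv ψ)) 2 volume ∧
          (∫ x, ρ x * (k ^ 2 * (ψ x) ^ 2 + (deriv ψ x) ^ 2)) = 1}) := by
    refine ⟨-(g*M0/c), ?_⟩
    rintro v ⟨u, ⟨hp1, hp2, hp3, hp4⟩, rfl⟩
    have hint0 : Integrable (fun x => ρ x * (k ^ 2 * (u x) ^ 2 + (deriv u x) ^ 2)) := by
      by_contra hcon'
      rw [integral_undef hcon'] at hp4
      exact zero_ne_one hp4
    have husq : Integrable (fun x => u x ^ 2) := hp1.integrable_sq
    have hdusq : Integrable (fun x => deriv u x ^ 2) := hp2.integrable_sq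
    have hBsq : Integrable (fun x => (k^2 * u x + deriv (deriv u) x) ^ 2) :=
      ((hp1.const_mul (k^2)).add hp3).integrable_sq
    have hρ'u : Integrable (fun x => deriv ρ x * u x ^ 2) :=
      husq.bdd_mul hρ'cont.aestronglyMeasurable
        (Filter.Eventually.of_forall fun x => by rw [Real.norm_eq_abs]; exact hM0 x)
    have hules : (∫ x, u x ^ 2) ≤ 1/(c*k^2) := by
      have hle : (∫ x, (c*k^2) * u x ^ 2) ≤ ∫ x, ρ x * (k ^ 2 * (u x) ^ 2 + (deriv u x) ^ 2) := by
        refine integral_mono (husq.const_mul _) hint0 (fun x => ?_)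
        have h2 := mul_nonneg (mul_nonneg (sub_nonneg.2 (hρc x)) (sq_nonneg k)) (sq_nonneg (u x))
        have h3 := mul_nonneg (le_trans hc.le (hρc x)) (sq_nonneg (deriv u x))
        linarith [h2, h3]
      rw [integral_const_mul, hp4] at hle
      rw [le_div_iff₀ (by positivity)]
      linarith
    have hFint : Integrable (fun x => s * μ * (4 * k ^ 2 * (deriv u x) ^ 2
          + (k ^ 2 * u x + deriv (deriv u) x) ^ 2)
        - g * k ^ 2 * deriv ρ x * (u x) ^ 2) := by
      refine Integrable.sub (((hdusq.const_mul (4*k^2)).add hBsq).const_mul (s*μ)) ?_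
      have h5 := hρ'u.const_mul (g*k^2)
      have h6 : (fun x => g * k ^ 2 * deriv ρ x * (u x) ^ 2)
          = fun x => (g*k^2) * (deriv ρ x * u x ^ 2) := by funext x; ring
      rwa [h6]
    have hlb : (∫ x, (-(g*k^2*M0)) * u x ^ 2) ≤ ∫ x, s * μ * (4 * k ^ 2 * (deriv u x) ^ 2
          + (k ^ 2 * u x + deriv (deriv u) x) ^ 2)
        - g * k ^ 2 * deriv ρ x * (u x) ^ 2 := by
      refine integral_mono (husq.const_mul _) hFint (fun x => ?_)
      have h5 := (abs_le.1 (hM0 x)).2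
      have h6 := mul_nonneg (sub_nonneg.2 h5)
        (mul_nonneg (mul_nonneg hg.le (sq_nonneg k)) (sq_nonneg (u x)))
      have h7 : (0:ℝ) ≤ s * μ * (4 * k ^ 2 * (deriv u x) ^ 2
          + (k ^ 2 * u x + deriv (deriv u) x) ^ 2) := by positivity
      linarith [h6, h7]
    rw [integral_const_mul] at hlb
    have hInn : 0 ≤ ∫ x, u x ^ 2 := integral_nonneg fun x => sq_nonneg _
    have h8 : (g*k^2*M0) * (∫ x, u x ^ 2) ≤ (g*k^2*M0) * (1/(c*k^2)) :=
      mul_le_mul_of_nonneg_left hules (by positivity)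
    have h9 : (g*k^2*M0)*(1/(c*k^2)) = g*M0/c := by
      field_simp
    linarith [h8, h9, hlb]
  -- conclude
  refine le_trans (csInf_le hbdd ⟨ψw, ⟨hmem1, hmem2, hmem3, hcon⟩, hval⟩) ?_
  rw [ht2]
  have e2 : N⁻¹ * (s*μ*I1 - g*k^2*P) = (μ*I1/N)*s - g*k^2*P/N := by ring
  rw [e2]
  have h3 : (μ*I1/N)*s ≤ (μ*C/(c*a^2*Q))*s := by
    refine mul_le_mul_of_nonneg_right ?_ hs.le
    exact div_le_div₀ (by positivity) (mul_le_mul_of_nonneg_left hI1le hμ.le) (by positivity) hNlow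
  have h4 : g*a^2*P/Nb ≤ g*k^2*P/N := by
    refine div_le_div₀ (by positivity) ?_ hNpos hNle
    linarith [mul_nonneg (mul_nonneg (sub_nonneg.2 ha2k) hg.le) hPpos.le]
  linarith
end

section
/- Under the normalization ∫ρ̄(|ξ|²ψ² + |ψ'|²) dx = 1, any λ > 0 obtained as λ² = −E(ψ) with E(ψ) < 0 satisfies λ ≤ √g ‖√(ρ̄'/ρ̄)‖_{L^∞(ℝ)} (where the supremum is over points where ρ̄' > 0). Hence the maximal growth rate Λ = sup_{0<|ξ|<∞} λ(|ξ|) is finite. -/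
open MeasureTheory

/-- Under the normalization `∫ ρ̄ (k²ψ² + ψ'²) = 1`, any growth
rate `Λ > 0` obtained as `Λ² = -E(ψ)` with `E(ψ) < 0` satisfies
`Λ ≤ √g · ‖√(ρ̄'/ρ̄)‖_{L^∞}` — i.e. `Λ ≤ √g · M` for any `M ≥ 0` bounding
`√(ρ̄'/ρ̄)` wherever `ρ̄' > 0`.  Hence the maximal growth rate is finite. -/
theorem stmt8_growth_rate_bound
    (ρ : ℝ → ℝ) (hρ : ContDiff ℝ (⊤ : ℕ∞) ρ)
    (hρ' : HasCompactSupport (deriv ρ))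
    (hρpos : ∃ c > 0, ∀ x, c ≤ ρ x)
    (g μ k Λ : ℝ) (hg : 0 < g) (hμ : 0 < μ) (hk : 0 < k) (hΛ : 0 < Λ)
    (M : ℝ) (hM : 0 ≤ M)
    (hMbound : ∀ x, deriv ρ x ≤ M ^ 2 * ρ x)
    (ψ : ℝ → ℝ) (hψsm : ContDiff ℝ 2 ψ)
    (hEInt : Integrable (fun x =>
      4 * k ^ 2 * (deriv ψ x) ^ 2 + (k ^ 2 * ψ x + deriv (deriv ψ) x) ^ 2))
    (hGInt : Integrable (fun x => deriv ρ x * (ψ x) ^ 2))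
    (hJInt : Integrable (fun x => ρ x * (k ^ 2 * (ψ x) ^ 2 + (deriv ψ x) ^ 2)))
    (hJ : (∫ x, ρ x * (k ^ 2 * (ψ x) ^ 2 + (deriv ψ x) ^ 2)) = 1)
    (hEneg : (Λ * μ * ∫ x, 4 * k ^ 2 * (deriv ψ x) ^ 2
          + (k ^ 2 * ψ x + deriv (deriv ψ) x) ^ 2)
        - g * k ^ 2 * (∫ x, deriv ρ x * (ψ x) ^ 2) < 0)
    (hLamSq : Λ ^ 2 = -((Λ * μ * ∫ x, 4 * k ^ 2 * (deriv ψ x) ^ 2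
          + (k ^ 2 * ψ x + deriv (deriv ψ) x) ^ 2)
        - g * k ^ 2 * (∫ x, deriv ρ x * (ψ x) ^ 2))) :
    Λ ≤ Real.sqrt g * M := by
  obtain ⟨c, hc, hcρ⟩ := hρpos
  have hρnn : ∀ x, 0 ≤ ρ x := fun x => hc.le.trans (hcρ x)
  -- A ≥ 0
  have hA : 0 ≤ ∫ x, 4 * k ^ 2 * (deriv ψ x) ^ 2
      + (k ^ 2 * ψ x + deriv (deriv ψ) x) ^ 2 := by
    apply integral_nonneg
    intro x
    positivity
  -- ρ ψ² integrable
  have hcont : Continuous fun x => ρ x * ψ x ^ 2 :=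
    (hρ.continuous).mul ((hψsm.continuous).pow 2)
  have hInt2 : Integrable (fun x => ρ x * ψ x ^ 2) := by
    refine Integrable.mono' (hJInt.const_mul (1 / k ^ 2))
      hcont.aestronglyMeasurable (Filter.Eventually.of_forall fun x => ?_)
    have h1 : 0 ≤ ρ x * ψ x ^ 2 := mul_nonneg (hρnn x) (sq_nonneg _)
    rw [Real.norm_eq_abs, abs_of_nonneg h1]
    have : k ^ 2 * (ρ x * ψ x ^ 2) ≤ ρ x * (k ^ 2 * ψ x ^ 2 + (deriv ψ x) ^ 2) := by
      have : 0 ≤ ρ x * (deriv ψ x) ^ 2 := mul_nonneg (hρnn x) (sq_nonneg _)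
      nlinarith
    have hk2 : (0:ℝ) < k ^ 2 := by positivity
    rw [div_mul_eq_mul_div, one_mul, le_div_iff₀ hk2]
    linarith [this]
  -- ∫ ρ ψ² ≤ 1/k²
  have hbase : k ^ 2 * ∫ x, ρ x * ψ x ^ 2 ≤ 1 := by
    rw [← hJ, ← integral_const_mul]
    refine integral_mono (hInt2.const_mul _) hJInt fun x => ?_
    have : 0 ≤ ρ x * (deriv ψ x) ^ 2 := mul_nonneg (hρnn x) (sq_nonneg _)
    nlinarith
  -- G ≤ M² ∫ ρ ψ²
  have hG : (∫ x, deriv ρ x * (ψ x) ^ 2) ≤ M ^ 2 * ∫ x, ρ x * ψ x ^ 2 := by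
    rw [← integral_const_mul]
    refine integral_mono hGInt (hInt2.const_mul _) fun x => ?_
    have := hMbound x
    have h2 : (0:ℝ) ≤ ψ x ^ 2 := sq_nonneg _
    nlinarith
  have hΛsq : Λ ^ 2 ≤ g * M ^ 2 := by
    have hAnn : 0 ≤ Λ * μ * ∫ x, 4 * k ^ 2 * (deriv ψ x) ^ 2
        + (k ^ 2 * ψ x + deriv (deriv ψ) x) ^ 2 := mul_nonneg (by positivity) hA
    have hρψnn : 0 ≤ ∫ x, ρ x * ψ x ^ 2 :=
      integral_nonneg fun x => mul_nonneg (hρnn x) (sq_nonneg _)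
    set G := ∫ x, deriv ρ x * (ψ x) ^ 2 with hGdef
    set I := ∫ x, ρ x * ψ x ^ 2 with hIdef
    have h1 : Λ ^ 2 ≤ g * k ^ 2 * G := by linarith
    have h2 : g * k ^ 2 * G ≤ g * k ^ 2 * (M ^ 2 * I) :=
      mul_le_mul_of_nonneg_left hG (by positivity)
    have h3 : g * M ^ 2 * (k ^ 2 * I) ≤ g * M ^ 2 * 1 :=
      mul_le_mul_of_nonneg_left hbase (by positivity)
    have h4 : g * k ^ 2 * (M ^ 2 * I) = g * M ^ 2 * (k ^ 2 * I) := by ring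
    linarith
  calc Λ = Real.sqrt (Λ ^ 2) := by rw [Real.sqrt_sq hΛ.le]
    _ ≤ Real.sqrt (g * M ^ 2) := Real.sqrt_le_sqrt hΛsq
    _ = Real.sqrt g * M := by
        rw [Real.sqrt_mul hg.le, Real.sqrt_sq hM]
end

section
/- Let y : [0,T] → [0,∞) be continuous and satisfy y(t) ≤ C₄(δ₀ + ∫₀ᵗ y(s)³ ds) for all t, with C₄ ≥ 1 and 2tδ₀²C₄³ < 1. Then y(t) ≤ √(δ₀²C₄²/(1 − 2tδ₀²C₄³)). In particular, if T ≤ 1/(4δ₀²C₄³) then y(t) ≤ √2 δ₀C₄ on [0,T]. -/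
/-! With `z t = δ₀ + ∫₀ᵗ y³` the hypothesis reads `y ≤ C₄ z`, so `z' = y³ ≤ C₄³ z³` and
`(z⁻²)' = -2 z' / z³ ≥ -2 C₄³`. Integrating from `z 0 = δ₀` gives `z t⁻² ≥ δ₀⁻² - 2 C₄³ t`, that is
`z t² ≤ δ₀² / (1 - 2 t δ₀² C₄³)`, and `y² ≤ C₄² z²` finishes. -/

open Set intervalIntegral

theorem inv_pow_sub_le_of_deriv_le_mul_pow {z z' : ℝ → ℝ} {a b K : ℝ} {n : ℕ}
    (hz : ContinuousOn z (Icc a b)) (hpos : ∀ x ∈ Icc a b, 0 < z x)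
    (hderiv : ∀ x ∈ Ioo a b, HasDerivAt z (z' x) x)
    (hle : ∀ x ∈ Ioo a b, z' x ≤ K * z x ^ (n + 1)) {t : ℝ} (ht : t ∈ Icc a b) :
    (z a ^ n)⁻¹ - n * K * (t - a) ≤ (z t ^ n)⁻¹ := by
  have hmono : MonotoneOn (fun x => (z x ^ n)⁻¹ + n * K * x) (Icc a b) := by
    refine monotoneOn_of_hasDerivWithinAt_nonneg (convex_Icc a b)
      (f' := fun x => -(n * z x ^ (n - 1) * z' x) / (z x ^ n) ^ 2 + n * K) ?_ ?_ ?_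
    · exact ((hz.pow n).inv₀ fun x hx => (pow_pos (hpos x hx) n).ne').add
        (continuousOn_const.mul continuousOn_id)
    · intro x hx
      rw [interior_Icc] at hx
      have hzx := (pow_pos (hpos x (Ioo_subset_Icc_self hx)) n).ne'
      exact ((((hderiv x hx).pow n).inv hzx).add
        ((hasDerivAt_id x).const_mul (n * K)) |>.congr_deriv (by simp)).hasDerivWithinAt
    · intro x hx
      rw [interior_Icc] at hx
      have hzx := hpos x (Ioo_subset_Icc_self hx)
      rw [neg_div, neg_add_eq_sub, sub_nonneg, div_le_iff₀ (by positivity)]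
      rcases n with _ | m
      · simp
      · have := hle x hx
        push_cast
        calc ((m:ℝ) + 1) * z x ^ m * z' x = (m + 1) * (z x ^ m * z' x) := by ring
          _ ≤ (m + 1) * (z x ^ m * (K * z x ^ (m + 2))) := by gcongr
          _ = _ := by ring
  have := hmono (left_mem_Icc.2 (ht.1.trans ht.2)) ht ht.1
  simp only at this
  linarith

theorem hasDerivAt_integral_of_continuousOn_Icc {f : ℝ → ℝ} {a b x : ℝ}
    (hf : ContinuousOn f (Icc a b)) (hx : x ∈ Ioo a b) :
    HasDerivAt (fun t => ∫ s in a..t, f s) (f x) x :=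
  integral_hasDerivAt_right
    ((hf.mono (Icc_subset_Icc_right hx.2.le)).intervalIntegrable_of_Icc hx.1.le)
    ((hf.mono Ioo_subset_Icc_self).stronglyMeasurableAtFilter isOpen_Ioo x hx)
    (hf.continuousAt (Icc_mem_nhds hx.1 hx.2))

theorem continuousOn_integral_of_continuousOn_Icc {f : ℝ → ℝ} {a b : ℝ}
    (hf : ContinuousOn f (Icc a b)) : ContinuousOn (fun t => ∫ s in a..t, f s) (Icc a b) := by
  rcases le_or_gt a b with hab | hab
  · rw [← uIcc_of_le hab] at hf ⊢
    exact continuousOn_primitive_interval hf.integrableOn_uIcc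
  · simp [Icc_eq_empty_of_lt hab]

theorem sq_le_div_of_le_mul_add_integral_cube {y : ℝ → ℝ} {T δ C : ℝ} (hδ : 0 < δ)
    (hycont : ContinuousOn y (Icc 0 T)) (hynn : ∀ t ∈ Icc 0 T, 0 ≤ y t)
    (hy : ∀ t ∈ Icc 0 T, y t ≤ C * (δ + ∫ s in (0:ℝ)..t, y s ^ 3))
    {t : ℝ} (ht : t ∈ Icc 0 T) (hsmall : 2 * t * δ ^ 2 * C ^ 3 < 1) :
    y t ^ 2 ≤ δ ^ 2 * C ^ 2 / (1 - 2 * t * δ ^ 2 * C ^ 3) := by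
  set z : ℝ → ℝ := fun t => δ + ∫ s in (0:ℝ)..t, y s ^ 3
  have hy3 : ContinuousOn (fun s => y s ^ 3) (Icc 0 T) := hycont.pow 3
  have hzδ : ∀ x ∈ Icc 0 T, δ ≤ z x := fun x hx =>
    le_add_of_nonneg_right <| integral_nonneg hx.1 fun s hs =>
      pow_nonneg (hynn s ⟨hs.1, hs.2.trans hx.2⟩) 3
  have hz : ContinuousOn z (Icc 0 T) :=
    continuousOn_const.add (continuousOn_integral_of_continuousOn_Icc hy3)
  have hcube : ∀ x ∈ Ioo 0 T, y x ^ 3 ≤ C ^ 3 * z x ^ (2 + 1) := fun x hx => by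
    rw [← mul_pow]
    exact pow_le_pow_left₀ (hynn x (Ioo_subset_Icc_self hx)) (hy x (Ioo_subset_Icc_self hx)) 3
  have hinv := inv_pow_sub_le_of_deriv_le_mul_pow hz (fun x hx => hδ.trans_le (hzδ x hx))
    (fun x hx => (hasDerivAt_integral_of_continuousOn_Icc hy3 hx).const_add δ) hcube ht
  have hP : 0 < 1 - 2 * t * δ ^ 2 * C ^ 3 := by linarith
  have hz2 : z t ^ 2 ≤ δ ^ 2 / (1 - 2 * t * δ ^ 2 * C ^ 3) := by
    rw [← inv_div, le_inv_comm₀ (pow_pos (hδ.trans_le (hzδ t ht)) 2) (by positivity)]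
    have hz0 : z 0 = δ := by simp [z]
    rw [hz0] at hinv
    calc (1 - 2 * t * δ ^ 2 * C ^ 3) / δ ^ 2 = (δ ^ 2)⁻¹ - (2:ℕ) * C ^ 3 * (t - 0) := by
          field_simp; push_cast; ring
      _ ≤ _ := hinv
  calc y t ^ 2 ≤ (C * z t) ^ 2 := pow_le_pow_left₀ (hynn t ht) (hy t ht) 2
    _ = C ^ 2 * z t ^ 2 := mul_pow _ _ _
    _ ≤ C ^ 2 * (δ ^ 2 / (1 - 2 * t * δ ^ 2 * C ^ 3)) := by gcongr
    _ = _ := by ring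

theorem stmt17_cubic_gronwall_general
    (T δ₀ C₄ : ℝ) (hδ₀ : 0 < δ₀) (hC₄ : 1 ≤ C₄)
    (y : ℝ → ℝ) (hycont : ContinuousOn y (Set.Icc 0 T))
    (hynn : ∀ t ∈ Set.Icc 0 T, 0 ≤ y t)
    (hy : ∀ t ∈ Set.Icc 0 T, y t ≤ C₄ * (δ₀ + ∫ s in (0:ℝ)..t, (y s) ^ 3)) :
    (∀ t ∈ Set.Icc 0 T, 2 * t * δ₀ ^ 2 * C₄ ^ 3 < 1 →
      y t ≤ Real.sqrt (δ₀ ^ 2 * C₄ ^ 2 / (1 - 2 * t * δ₀ ^ 2 * C₄ ^ 3))) ∧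
    (T ≤ 1 / (4 * δ₀ ^ 2 * C₄ ^ 3) →
      ∀ t ∈ Set.Icc 0 T, y t ≤ Real.sqrt 2 * δ₀ * C₄) := by
  have hmain : ∀ t ∈ Icc 0 T, 2 * t * δ₀ ^ 2 * C₄ ^ 3 < 1 →
      y t ≤ √(δ₀ ^ 2 * C₄ ^ 2 / (1 - 2 * t * δ₀ ^ 2 * C₄ ^ 3)) := fun t ht hsmall =>
    Real.le_sqrt_of_sq_le (sq_le_div_of_le_mul_add_integral_cube hδ₀ hycont hynn hy ht hsmall)
  refine ⟨hmain, fun hT t ht => ?_⟩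
  have hC₀ : 0 < C₄ := zero_lt_one.trans_le hC₄
  have hhalf : 2 * t * δ₀ ^ 2 * C₄ ^ 3 ≤ 1 / 2 := by
    have := (le_div_iff₀ (by positivity)).1 (ht.2.trans hT)
    linarith
  calc y t ≤ √(δ₀ ^ 2 * C₄ ^ 2 / (1 - 2 * t * δ₀ ^ 2 * C₄ ^ 3)) := hmain t ht (by linarith)
    _ ≤ √((√2 * δ₀ * C₄) ^ 2) := by
      refine Real.sqrt_le_sqrt ?_
      rw [mul_pow, mul_pow, Real.sq_sqrt zero_le_two, div_le_iff₀ (by linarith)]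
      nlinarith [mul_pos (pow_pos hδ₀ 2) (pow_pos hC₀ 2)]
    _ = √2 * δ₀ * C₄ := Real.sqrt_sq (by positivity)

/-- Cubic Grönwall-type inequality.  If a continuous nonnegative
`y` satisfies `y t ≤ C₄(δ₀ + ∫₀ᵗ y³)` with `C₄ ≥ 1`, then wherever
`2 t δ₀² C₄³ < 1` one has `y t ≤ √(δ₀²C₄²/(1 - 2tδ₀²C₄³))`; in particular if
`T ≤ 1/(4δ₀²C₄³)` then `y t ≤ √2 δ₀ C₄` on `[0,T]`. -/
theorem stmt17_cubic_gronwall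
    (T δ₀ C₄ : ℝ) (hT : 0 ≤ T) (hδ₀ : 0 < δ₀) (hC₄ : 1 ≤ C₄)
    (y : ℝ → ℝ) (hycont : ContinuousOn y (Set.Icc 0 T))
    (hynn : ∀ t ∈ Set.Icc 0 T, 0 ≤ y t)
    (hy : ∀ t ∈ Set.Icc 0 T, y t ≤ C₄ * (δ₀ + ∫ s in (0:ℝ)..t, (y s) ^ 3)) :
    (∀ t ∈ Set.Icc 0 T, 2 * t * δ₀ ^ 2 * C₄ ^ 3 < 1 →
      y t ≤ Real.sqrt (δ₀ ^ 2 * C₄ ^ 2 / (1 - 2 * t * δ₀ ^ 2 * C₄ ^ 3))) ∧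
    (T ≤ 1 / (4 * δ₀ ^ 2 * C₄ ^ 3) →
      ∀ t ∈ Set.Icc 0 T, y t ≤ Real.sqrt 2 * δ₀ * C₄) :=
  stmt17_cubic_gronwall_general T δ₀ C₄ hδ₀ hC₄ y hycont hynn hy
end
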